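/- arXiv:1506.01654 — 3 statements merged into one kernel-verified Lean document; each statement's English description precedes it below -/
import Mathlib

section
/- Let F : ℂ^n → ℂ^n be a polynomial map of the form F_i = X_i + H_i(X_1,…,X_n) for 1 ≤ i ≤ n, where each H_i is a homogeneous polynomial of degree 3. Fix i and let (P_k^i) be the difference sequence constructed with P = X_i. Then for every k ≥ 1, every nonzero homogeneous component of P_k^i has odd degree d satisfying 2k+1 ≤ d ≤ 3^k. -/
open MvPolynomial Finset

/-- The difference sequence associated to a polynomial map `F` and a polynomial `P`:
`P_0 = P` and `P_k = P_{k-1}(F_1, …, F_n) - P_{k-1}`. -/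
noncomputable def diffSeq {n : ℕ} {K : Type*} [CommRing K]
    (F : Fin n → MvPolynomial (Fin n) K) (P : MvPolynomial (Fin n) K) :
    ℕ → MvPolynomial (Fin n) K
  | 0 => P
  | k + 1 => aeval F (diffSeq F P k) - diffSeq F P k

namespace Stmt5Aux

variable {n : ℕ}

/-- `Supp T φ` : every monomial of `φ` has total degree in `T`. -/
def Supp (T : Set ℕ) (φ : MvPolynomial (Fin n) ℂ) : Prop :=
  ∀ m ∈ φ.support, m.degree ∈ T

lemma supp_mono {T T' : Set ℕ} (h : T ⊆ T') {φ : MvPolynomial (Fin n) ℂ}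
    (hφ : Supp T φ) : Supp T' φ := fun m hm => h (hφ m hm)

lemma supp_congr {T : Set ℕ} {p q : MvPolynomial (Fin n) ℂ} (h : p = q)
    (hp : Supp T p) : Supp T q := h ▸ hp

lemma supp_zero (T : Set ℕ) : Supp T (0 : MvPolynomial (Fin n) ℂ) := by
  intro m hm; simp at hm

lemma supp_add {T : Set ℕ} {p q : MvPolynomial (Fin n) ℂ}
    (hp : Supp T p) (hq : Supp T q) : Supp T (p + q) := by
  intro m hm
  rw [mem_support_iff, coeff_add] at hm
  by_cases h : coeff m p = 0
  · exact hq m (mem_support_iff.2 (by intro h'; apply hm; rw [h, h', add_zero]))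
  · exact hp m (mem_support_iff.2 h)

lemma supp_sub {T : Set ℕ} {p q : MvPolynomial (Fin n) ℂ}
    (hp : Supp T p) (hq : Supp T q) : Supp T (p - q) := by
  intro m hm
  rw [mem_support_iff, coeff_sub] at hm
  by_cases h : coeff m p = 0
  · exact hq m (mem_support_iff.2 (by intro h'; apply hm; rw [h, h', sub_zero]))
  · exact hp m (mem_support_iff.2 h)

lemma supp_smul {T : Set ℕ} {p : MvPolynomial (Fin n) ℂ} (c : ℂ)
    (hp : Supp T p) : Supp T (c • p) := by
  intro m hm
  rw [mem_support_iff, smul_eq_C_mul, coeff_C_mul] at hm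
  exact hp m (mem_support_iff.2 fun h => hm (by rw [h, mul_zero]))

lemma supp_sum {T : Set ℕ} {α : Type*} {s : Finset α} {f : α → MvPolynomial (Fin n) ℂ}
    (h : ∀ a ∈ s, Supp T (f a)) : Supp T (∑ a ∈ s, f a) := by
  classical
  induction s using Finset.induction_on with
  | empty => simpa using supp_zero T
  | @insert a s ha ih =>
    rw [Finset.sum_insert ha]
    exact supp_add (h _ (Finset.mem_insert_self _ _))
      (ih fun b hbs => h b (Finset.mem_insert_of_mem hbs))

lemma supp_mul {T T' : Set ℕ} {p q : MvPolynomial (Fin n) ℂ}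
    (hp : Supp T p) (hq : Supp T' q) :
    Supp {e | ∃ a ∈ T, ∃ b ∈ T', e = a + b} (p * q) := by
  classical
  intro m hm
  have := MvPolynomial.support_mul p q hm
  rw [Finset.mem_add] at this
  obtain ⟨a, ha, b, hb, rfl⟩ := this
  refine ⟨a.degree, hp a ha, b.degree, hq b hb, ?_⟩
  simp [Finsupp.degree_eq_weight_one, map_add]

lemma supp_of_isHomogeneous {d : ℕ} {φ : MvPolynomial (Fin n) ℂ}
    (h : φ.IsHomogeneous d) : Supp {d} φ := by
  intro m hm
  by_contra hne
  exact mem_support_iff.1 hm (h.coeff_eq_zero hne)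

/-- The monomials of `(X j + H j)^r - X j ^ r` have degrees in `[r+2, 3r]` with
the same parity as `r`. -/
lemma supp_pow_sub (H : Fin n → MvPolynomial (Fin n) ℂ) (hH : ∀ i, (H i).IsHomogeneous 3)
    (j : Fin n) (r : ℕ) :
    Supp {e | r + 2 ≤ e ∧ e ≤ 3 * r ∧ e % 2 = r % 2}
      ((X j + H j) ^ r - X j ^ r : MvPolynomial (Fin n) ℂ) := by
  have hsplit : ((X j + H j) ^ r - X j ^ r : MvPolynomial (Fin n) ℂ)
      = ∑ s ∈ Finset.range r, X j ^ s * H j ^ (r - s) * (r.choose s : MvPolynomial (Fin n) ℂ) := by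
    rw [add_pow, Finset.sum_range_succ]
    simp
  rw [hsplit]
  apply supp_sum
  intro s hs
  rw [Finset.mem_range] at hs
  have hhom : (X j ^ s * H j ^ (r - s) * (r.choose s : MvPolynomial (Fin n) ℂ)).IsHomogeneous
      (1 * s + 3 * (r - s) + 0) := by
    refine IsHomogeneous.mul (IsHomogeneous.mul ?_ ?_) ?_
    · exact (isHomogeneous_X ℂ j).pow s
    · exact (hH j).pow (r - s)
    · rw [← C_eq_coe_nat]; exact isHomogeneous_C _ _
  refine supp_mono ?_ (supp_of_isHomogeneous hhom)
  intro e he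
  rw [Set.mem_singleton_iff] at he
  subst he
  refine ⟨by omega, by omega, by omega⟩

/-- Key product lemma: over a finset `s`,
`∏ (X j + H j)^(m j) - ∏ (X j)^(m j)` has monomial degrees in `[D+2, 3D]`
with the parity of `D`, where `D = ∑ j ∈ s, m j`. -/
lemma supp_prod_sub (H : Fin n → MvPolynomial (Fin n) ℂ) (hH : ∀ i, (H i).IsHomogeneous 3)
    (m : Fin n →₀ ℕ) (s : Finset (Fin n)) :
    Supp {e | (∑ j ∈ s, m j) + 2 ≤ e ∧ e ≤ 3 * (∑ j ∈ s, m j) ∧ e % 2 = (∑ j ∈ s, m j) % 2}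
      ((∏ j ∈ s, (X j + H j) ^ (m j)) - ∏ j ∈ s, (X j : MvPolynomial (Fin n) ℂ) ^ (m j)) := by
  classical
  induction s using Finset.induction_on with
  | empty => simpa using supp_zero _
  | @insert a s ha ih =>
    rw [Finset.prod_insert ha, Finset.prod_insert ha]
    set r := m a
    set D := ∑ j ∈ s, m j with hD
    have hsum : ∑ j ∈ insert a s, m j = r + D := by rw [Finset.sum_insert ha]
    rw [hsum]
    set A : MvPolynomial (Fin n) ℂ := X a ^ r
    set E : MvPolynomial (Fin n) ℂ := (X a + H a) ^ r - A
    set Q : MvPolynomial (Fin n) ℂ := ∏ j ∈ s, (X j : MvPolynomial (Fin n) ℂ) ^ (m j)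
    set E' : MvPolynomial (Fin n) ℂ := (∏ j ∈ s, (X j + H j) ^ (m j)) - Q
    have hid : (X a + H a) ^ r * (∏ j ∈ s, (X j + H j) ^ (m j)) - A * Q
        = A * E' + E * Q + E * E' := by
      have h1 : (X a + H a) ^ r = A + E := by ring
      have h2 : (∏ j ∈ s, (X j + H j) ^ (m j)) = Q + E' := by ring
      rw [h1, h2]; ring
    rw [hid]
    have hA : Supp {r} A := supp_of_isHomogeneous (by simpa using (isHomogeneous_X ℂ a).pow r)
    have hQ : Supp {D} Q := by
      apply supp_of_isHomogeneous
      have : (Q : MvPolynomial (Fin n) ℂ).IsHomogeneous (∑ j ∈ s, 1 * (m j)) := by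
        apply IsHomogeneous.prod
        intro j _
        exact (isHomogeneous_X ℂ j).pow (m j)
      simpa [one_mul] using this
    have hE : Supp {e | r + 2 ≤ e ∧ e ≤ 3 * r ∧ e % 2 = r % 2} E := supp_pow_sub H hH a r
    have hE' : Supp {e | D + 2 ≤ e ∧ e ≤ 3 * D ∧ e % 2 = D % 2} E' := ih
    refine supp_add (supp_add ?_ ?_) ?_
    · refine supp_mono ?_ (supp_mul hA hE')
      rintro e ⟨x, hx, y, hy, rfl⟩
      rw [Set.mem_singleton_iff] at hx
      obtain ⟨h1, h2, h3⟩ := hy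
      subst hx
      refine ⟨by omega, by omega, by omega⟩
    · refine supp_mono ?_ (supp_mul hE hQ)
      rintro e ⟨x, hx, y, hy, rfl⟩
      rw [Set.mem_singleton_iff] at hy
      obtain ⟨h1, h2, h3⟩ := hx
      subst hy
      refine ⟨by omega, by omega, by omega⟩
    · refine supp_mono ?_ (supp_mul hE hE')
      rintro e ⟨x, hx, y, hy, rfl⟩
      obtain ⟨h1, h2, h3⟩ := hx
      obtain ⟨h4, h5, h6⟩ := hy
      refine ⟨by omega, by omega, by omega⟩

/-- The monomial version of the step. -/
lemma supp_aeval_monomial_sub (H : Fin n → MvPolynomial (Fin n) ℂ)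
    (hH : ∀ i, (H i).IsHomogeneous 3) (F : Fin n → MvPolynomial (Fin n) ℂ)
    (hF : ∀ i, F i = X i + H i) (m : Fin n →₀ ℕ) :
    Supp {e | m.degree + 2 ≤ e ∧ e ≤ 3 * m.degree ∧ e % 2 = m.degree % 2}
      (aeval F (monomial m (1:ℂ)) - monomial m (1:ℂ)) := by
  classical
  have h1 : (aeval F (monomial m (1:ℂ)) : MvPolynomial (Fin n) ℂ)
      = ∏ j ∈ m.support, (X j + H j) ^ (m j) := by
    rw [aeval_monomial]
    simp only [map_one, one_mul]
    rw [Finsupp.prod]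
    exact Finset.prod_congr rfl fun j _ => by rw [hF]
  have h2 : (monomial m (1:ℂ) : MvPolynomial (Fin n) ℂ)
      = ∏ j ∈ m.support, (X j : MvPolynomial (Fin n) ℂ) ^ (m j) := by
    rw [monomial_eq]
    simp [Finsupp.prod]
  apply supp_congr (show _ = aeval F (monomial m (1:ℂ)) - monomial m (1:ℂ) from by rw [h1, h2])
  have := supp_prod_sub H hH m m.support
  rw [show m.degree = ∑ j ∈ m.support, m j from rfl]
  simpa using this

/-- The step lemma. -/
lemma supp_step (H : Fin n → MvPolynomial (Fin n) ℂ)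
    (hH : ∀ i, (H i).IsHomogeneous 3) (F : Fin n → MvPolynomial (Fin n) ℂ)
    (hF : ∀ i, F i = X i + H i) {a b : ℕ} {Q : MvPolynomial (Fin n) ℂ}
    (hQ : Supp {e | Odd e ∧ a ≤ e ∧ e ≤ b} Q) :
    Supp {e | Odd e ∧ a + 2 ≤ e ∧ e ≤ 3 * b} (aeval F Q - Q) := by
  classical
  have hQsum : Q = ∑ m ∈ Q.support, (coeff m Q) • (monomial m (1:ℂ)) := by
    conv_lhs => rw [Q.as_sum]
    exact Finset.sum_congr rfl fun m _ => by rw [smul_monomial, smul_eq_mul, mul_one]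
  have hexp : aeval F Q - Q
      = ∑ m ∈ Q.support, (coeff m Q) • (aeval F (monomial m (1:ℂ)) - monomial m (1:ℂ)) := by
    conv_lhs => rw [hQsum]
    rw [map_sum, ← Finset.sum_sub_distrib]
    refine Finset.sum_congr rfl fun m _ => ?_
    rw [smul_sub, map_smul]
  rw [hexp]
  apply supp_sum
  intro m hm
  apply supp_smul
  refine supp_mono ?_ (supp_aeval_monomial_sub H hH F hF m)
  obtain ⟨hodd, hle1, hle2⟩ := hQ m hm
  rintro e ⟨h1, h2, h3⟩
  rw [Nat.odd_iff] at hodd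
  refine ⟨?_, by omega, by omega⟩
  rw [Nat.odd_iff]
  omega

end Stmt5Aux

open Stmt5Aux in
theorem stmt_5 {n : ℕ} (H : Fin n → MvPolynomial (Fin n) ℂ)
    (hH : ∀ i, (H i).IsHomogeneous 3)
    (F : Fin n → MvPolynomial (Fin n) ℂ) (hF : ∀ i, F i = X i + H i)
    (i : Fin n) :
    ∀ k : ℕ, 1 ≤ k → ∀ d : ℕ, homogeneousComponent d (diffSeq F (X i) k) ≠ 0 →
      Odd d ∧ 2 * k + 1 ≤ d ∧ d ≤ 3 ^ k := by
  have key : ∀ k : ℕ, 1 ≤ k →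
      Supp {e | Odd e ∧ 2 * k + 1 ≤ e ∧ e ≤ 3 ^ k} (diffSeq F (X i) k) := by
    intro k hk
    induction k with
    | zero => omega
    | succ k ih =>
      rcases Nat.eq_or_lt_of_le hk with h1 | h1
      · -- k + 1 = 1
        have hk0 : k = 0 := by omega
        subst hk0
        have : diffSeq F (X i) 1 = H i := by
          show aeval F (diffSeq F (X i) 0) - diffSeq F (X i) 0 = H i
          show aeval F (X i) - X i = H i
          rw [aeval_X, hF]
          ring
        rw [this]
        refine supp_mono ?_ (supp_of_isHomogeneous (hH i))
        rintro e he
        rw [Set.mem_singleton_iff] at he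
        subst he
        exact ⟨by decide, by omega, by omega⟩
      · have hk1 : 1 ≤ k := by omega
        have ihk := ih hk1
        have hstep := supp_step H hH F hF ihk
        have : diffSeq F (X i) (k + 1)
            = aeval F (diffSeq F (X i) k) - diffSeq F (X i) k := rfl
        rw [this]
        refine supp_mono ?_ hstep
        rintro e ⟨h1, h2, h3⟩
        refine ⟨h1, by omega, ?_⟩
        calc e ≤ 3 * 3 ^ k := h3
        _ = 3 ^ (k + 1) := by ring
  intro k hk d hd
  rw [MvPolynomial.ne_zero_iff] at hd
  obtain ⟨m, hm⟩ := hd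
  rw [coeff_homogeneousComponent] at hm
  split_ifs at hm with hdeg
  · have := key k hk m (mem_support_iff.2 hm)
    rw [hdeg] at this
    exact this
  · simp at hm
end

section
/- Let F : ℂ^n → ℂ^n be a polynomial map of the form F = Id + H, i.e., F_i = X_i + H_i(X_1,…,X_n), where each H_i is a nonzero polynomial whose lower degree d_i is at least 2. If JH · H = 0, i.e., Σ_{j=1}^n (∂H_i/∂X_j)·H_j = 0 for all 1 ≤ i ≤ n, then F is a quasi-translation, i.e., X_i = F_i − H_i(F_1,…,F_n) for all 1 ≤ i ≤ n. -/
/-!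
Put `D i (t) = H i (X + t • H) - H i`, a polynomial in `t` over `ℂ[X]`. The chain rule gives
`D i' = ∑ j, (∂ⱼ H i)(X + t • H) * H j`, and subtracting `(JH · H) i (X + t • H) = 0` turns this
into the homogeneous linear system `D i' = -∑ j, (∂ⱼ H i)(X + t • H) * D j` with `D (0) = 0`.
Comparing coefficients of `t` shows `D = 0` in characteristic zero, so `H (X + H) = H` and
`X = F - H ∘ F`.
-/

open MvPolynomial

theorem Polynomial.eq_zero_of_derivative_eq_sum_mul {ι A : Type*} [Fintype ι] [CommSemiring A]
    [IsAddTorsionFree A] {D : ι → Polynomial A} (M : ι → ι → Polynomial A)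
    (hD : ∀ i, derivative (D i) = ∑ j, M i j * D j) (hD0 : ∀ i, (D i).coeff 0 = 0) (i : ι) :
    D i = 0 := by
  suffices ∀ k i, (D i).coeff k = 0 from Polynomial.ext fun k => this k i
  intro k
  induction k using Nat.strong_induction_on with
  | _ k ih =>
    intro i
    cases k with
    | zero => exact hD0 i
    | succ m =>
      have hderiv : (D i).coeff (m + 1) * (m + 1) = 0 := by
        rw [← coeff_derivative, hD, finsetSum_coeff]
        refine Finset.sum_eq_zero fun j _ => ?_
        rw [coeff_mul]
        refine Finset.sum_eq_zero fun x hx => ?_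
        rw [ih x.2 (Finset.Nat.antidiagonal.snd_lt hx) j, mul_zero]
      rw [← Nat.cast_succ, mul_comm, ← nsmul_eq_mul] at hderiv
      exact (nsmul_eq_zero_iff_right m.succ_ne_zero).mp hderiv

namespace MvPolynomial

section CommSemiring

variable {σ R : Type*} [CommSemiring R]

/-- `P(X + t • H)`, as a polynomial in `t` with coefficients in `MvPolynomial σ R`. -/
noncomputable def shiftAlong (H : σ → MvPolynomial σ R) :
    MvPolynomial σ R →ₐ[R] Polynomial (MvPolynomial σ R) :=
  aeval fun j => Polynomial.C (X j) + Polynomial.X * Polynomial.C (H j)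

variable (H : σ → MvPolynomial σ R)

theorem shiftAlong_X (j : σ) :
    shiftAlong H (X j) = Polynomial.C (X j) + Polynomial.X * Polynomial.C (H j) :=
  aeval_X _ j

theorem derivative_shiftAlong [Fintype σ] (P : MvPolynomial σ R) :
    Polynomial.derivative (shiftAlong H P) =
      ∑ j, shiftAlong H (pderiv j P) * Polynomial.C (H j) := by
  induction P using MvPolynomial.induction_on with
  | C r => simp [shiftAlong]
  | add p q hp hq => simp only [map_add, hp, hq, add_mul, Finset.sum_add_distrib]
  | mul_X p j hp =>
    have hXj : Polynomial.derivative (shiftAlong H (X j)) = Polynomial.C (H j) := by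
      simp [shiftAlong_X]
    rw [map_mul, Polynomial.derivative_mul, hp, hXj, Finset.sum_mul]
    simp only [pderiv_mul, map_add, map_mul, add_mul, Finset.sum_add_distrib]
    refine congrArg₂ (· + ·) ?_ ?_
    · exact Finset.sum_congr rfl fun _ _ => by ring
    · rw [Finset.sum_eq_single j (fun k _ hk => by simp [pderiv_X_of_ne hk.symm]) (by simp)]
      simp

theorem aeval_shiftAlong (t : MvPolynomial σ R) (P : MvPolynomial σ R) :
    Polynomial.aeval t (shiftAlong H P) = aeval (fun j => X j + t * H j) P := by
  have := DFunLike.congr_fun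
    (comp_aeval (R := R) (fun j => Polynomial.C (X j) + Polynomial.X * Polynomial.C (H j))
      ((Polynomial.aeval t).restrictScalars R)) P
  simp only [AlgHom.comp_apply, AlgHom.coe_restrictScalars'] at this
  rw [shiftAlong, this]
  congr 2 with j
  simp only [map_add, map_mul, Polynomial.aeval_C, Polynomial.aeval_X, Algebra.algebraMap_self,
    RingHom.id_apply]

theorem coeff_zero_shiftAlong (P : MvPolynomial σ R) : (shiftAlong H P).coeff 0 = P := by
  rw [Polynomial.coeff_zero_eq_aeval_zero, aeval_shiftAlong]
  simp

end CommSemiring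

section JacobianMulEqZero

variable {σ R : Type*} [Fintype σ] [CommRing R] [IsDomain R] [CharZero R]
  {H : σ → MvPolynomial σ R}

theorem shiftAlong_self_eq_C (hJH : ∀ i, ∑ j, pderiv j (H i) * H j = 0) (i : σ) :
    shiftAlong H (H i) = Polynomial.C (H i) := by
  rw [← sub_eq_zero]
  refine Polynomial.eq_zero_of_derivative_eq_sum_mul
    (D := fun i => shiftAlong H (H i) - Polynomial.C (H i))
    (fun i j => -shiftAlong H (pderiv j (H i))) (fun i => ?_)
    (fun i => by simp [coeff_zero_shiftAlong]) i
  have hflow : ∑ j, shiftAlong H (pderiv j (H i)) * shiftAlong H (H j) = 0 := by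
    simp only [← map_mul, ← map_sum, hJH i, map_zero]
  rw [Polynomial.derivative_sub, Polynomial.derivative_C, sub_zero, derivative_shiftAlong,
    ← sub_zero (∑ j, _), ← hflow, ← Finset.sum_sub_distrib]
  exact Finset.sum_congr rfl fun _ _ => by ring

theorem aeval_X_add_self_eq_self (hJH : ∀ i, ∑ j, pderiv j (H i) * H j = 0) (i : σ) :
    aeval (fun j => X j + H j) (H i) = H i := by
  have h := aeval_shiftAlong H 1 (H i)
  rw [shiftAlong_self_eq_C hJH, Polynomial.aeval_C] at h
  simpa using h.symm

end JacobianMulEqZero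

end MvPolynomial

theorem stmt_14_general {n : ℕ} (H : Fin n → MvPolynomial (Fin n) ℂ)
    (F : Fin n → MvPolynomial (Fin n) ℂ) (hF : ∀ i, F i = X i + H i)
    (hJH : ∀ i : Fin n, ∑ j : Fin n, pderiv j (H i) * H j = 0) :
    ∀ i : Fin n, (X i : MvPolynomial (Fin n) ℂ) = F i - aeval F (H i) := by
  intro i
  rw [show F = fun j => X j + H j from funext hF, aeval_X_add_self_eq_self hJH,
    add_sub_cancel_right]

theorem stmt_14 {n : ℕ} (H : Fin n → MvPolynomial (Fin n) ℂ)
    (hHne : ∀ i, H i ≠ 0)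
    (hH0 : ∀ i, homogeneousComponent 0 (H i) = 0)
    (hH1 : ∀ i, homogeneousComponent 1 (H i) = 0)
    (F : Fin n → MvPolynomial (Fin n) ℂ) (hF : ∀ i, F i = X i + H i)
    (hJH : ∀ i : Fin n, ∑ j : Fin n, pderiv j (H i) * H j = 0) :
    ∀ i : Fin n, (X i : MvPolynomial (Fin n) ℂ) = F i - aeval F (H i) :=
  stmt_14_general H F hF hJH
end

section
/- Let F : ℂ^n → ℂ^n be a polynomial map of the form F = Id + H, i.e., F_i = X_i + H_i(X_1,…,X_n), where each H_i is a nonzero polynomial whose lower degree d_i is at least 2. If F is a quasi-translation, i.e., X_i = F_i − H_i(F_1,…,F_n) for all 1 ≤ i ≤ n, then JH · H = 0, i.e., Σ_{j=1}^n (∂H_i/∂X_j)·H_j = 0 for all 1 ≤ i ≤ n. -/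
/-!
From `X = F - H ∘ F` and `F = X + H` we get `H ∘ (X + H) = H`, and iterating,
`H (X + k H) = H` for every `k ∈ ℕ`. Hence the polynomial `t ↦ H (X + t H)` over
`ℂ[X₁, …, Xₙ]` has infinitely many roots after subtracting `H`, so it is constant;
its coefficient of `t`, which is `JH · H`, therefore vanishes.
-/

open MvPolynomial

section LineSubst

variable {σ R : Type*} [CommRing R]

/-- `lineSubst H p = p (X + t • H)`, as a polynomial in `t` over `MvPolynomial σ R`. -/
noncomputable def lineSubst (H : σ → MvPolynomial σ R) :
    MvPolynomial σ R →ₐ[R] Polynomial (MvPolynomial σ R) :=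
  aeval fun j => Polynomial.C (X j) + Polynomial.X * Polynomial.C (H j)

theorem eval_lineSubst (H : σ → MvPolynomial σ R) (a : MvPolynomial σ R)
    (p : MvPolynomial σ R) :
    (lineSubst H p).eval a = aeval (fun j => X j + a * H j) p := by
  have hcomp : ((Polynomial.aeval a).restrictScalars R).comp (lineSubst H)
      = aeval fun j => X j + a * H j := by
    refine algHom_ext fun j => ?_
    simp [lineSubst, mul_comm a]
  simpa using congrArg (· p) hcomp

theorem coeff_zero_lineSubst (H : σ → MvPolynomial σ R) (p : MvPolynomial σ R) :
    (lineSubst H p).coeff 0 = p := by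
  simpa [Polynomial.coeff_zero_eq_eval_zero] using eval_lineSubst H 0 p

theorem coeff_one_lineSubst [Fintype σ] [DecidableEq σ] (H : σ → MvPolynomial σ R)
    (p : MvPolynomial σ R) :
    (lineSubst H p).coeff 1 = ∑ j, pderiv j p * H j := by
  induction p using MvPolynomial.induction_on with
  | C c => simp [lineSubst]
  | add p q hp hq => simp [hp, hq, Finset.sum_add_distrib, add_mul]
  | mul_X p j hp =>
    have hmul : lineSubst H (p * X j)
        = lineSubst H p * Polynomial.C (X j)
          + lineSubst H p * Polynomial.X * Polynomial.C (H j) := by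
      simp only [map_mul, lineSubst, aeval_X]
      ring
    rw [hmul, Polynomial.coeff_add, Polynomial.coeff_mul_C, Polynomial.coeff_mul_C,
      Polynomial.coeff_mul_X, hp, coeff_zero_lineSubst]
    simp only [pderiv_mul, pderiv_X, add_mul, Finset.sum_add_distrib, Finset.sum_mul,
      Pi.single_apply, mul_ite, mul_one, mul_zero, ite_mul, zero_mul, Finset.sum_ite_eq,
      Finset.mem_univ, if_true]
    exact congrArg₂ (· + ·) (Finset.sum_congr rfl fun _ _ => by ring) rfl

end LineSubst

theorem aeval_add_natCast_mul_eq_self {σ R : Type*} [CommRing R] (H : σ → MvPolynomial σ R)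
    (hH : ∀ i, aeval (fun j => X j + H j) (H i) = H i) (k : ℕ) (i : σ) :
    aeval (fun j => X j + (k : MvPolynomial σ R) * H j) (H i) = H i := by
  induction k generalizing i with
  | zero => simp
  | succ k ih =>
    have hstep : (fun j => X j + ((k + 1 : ℕ) : MvPolynomial σ R) * H j)
        = fun j => aeval (fun j => X j + H j) (X j + (k : MvPolynomial σ R) * H j) := by
      funext j
      simp only [map_add, map_mul, map_natCast, aeval_X, hH]
      push_cast
      ring
    rw [hstep, ← comp_aeval_apply, ih, hH]

theorem sum_pderiv_mul_eq_zero_of_forall_natCast {σ R : Type*} [Fintype σ] [DecidableEq σ]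
    [CommRing R] [IsDomain R] [CharZero R] (H : σ → MvPolynomial σ R) (p : MvPolynomial σ R)
    (hp : ∀ k : ℕ, aeval (fun j => X j + (k : MvPolynomial σ R) * H j) p = p) :
    ∑ j, pderiv j p * H j = 0 := by
  have hroots : {x | (lineSubst H p - Polynomial.C p).IsRoot x}.Infinite :=
    Set.infinite_of_injective_forall_mem Nat.cast_injective fun k : ℕ => by
      simp only [Set.mem_ofPred_eq, Polynomial.IsRoot, Polynomial.eval_sub,
        Polynomial.eval_C, eval_lineSubst, hp k, sub_self]
  have hconst : lineSubst H p = Polynomial.C p :=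
    sub_eq_zero.mp (Polynomial.eq_zero_of_infinite_isRoot _ hroots)
  simpa [hconst] using (coeff_one_lineSubst H p).symm

theorem stmt_15_general {n : ℕ} (H : Fin n → MvPolynomial (Fin n) ℂ)
    (F : Fin n → MvPolynomial (Fin n) ℂ) (hF : ∀ i, F i = X i + H i)
    (hqt : ∀ i : Fin n, (X i : MvPolynomial (Fin n) ℂ) = F i - aeval F (H i)) :
    ∀ i : Fin n, ∑ j : Fin n, pderiv j (H i) * H j = 0 := by
  obtain rfl : F = fun j => X j + H j := funext hF
  have hinv : ∀ i, aeval (fun j => X j + H j) (H i) = H i := fun i => by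
    linear_combination hqt i
  exact fun i => sum_pderiv_mul_eq_zero_of_forall_natCast H (H i)
    (aeval_add_natCast_mul_eq_self H hinv · i)

theorem stmt_15 {n : ℕ} (H : Fin n → MvPolynomial (Fin n) ℂ)
    (hHne : ∀ i, H i ≠ 0)
    (hH0 : ∀ i, homogeneousComponent 0 (H i) = 0)
    (hH1 : ∀ i, homogeneousComponent 1 (H i) = 0)
    (F : Fin n → MvPolynomial (Fin n) ℂ) (hF : ∀ i, F i = X i + H i)
    (hqt : ∀ i : Fin n, (X i : MvPolynomial (Fin n) ℂ) = F i - aeval F (H i)) :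
    ∀ i : Fin n, ∑ j : Fin n, pderiv j (H i) * H j = 0 :=
  stmt_15_general H F hF hqt
end
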